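/- arXiv:2303.06570 — 3 statements merged into one kernel-verified Lean document; each statement's English description precedes it below -/
import Mathlib

section
/- Define the transition matrix 𝒯(δ, f, g) ∈ M₂(k[1/x]) by 𝒯 = [[0, 1], [g(0)/x, −f(0)/x]] if δ > 0 and g(0) ≠ 0, and 𝒯 = [[1, 0], [−g(0)/x, f(0)/x]] otherwise. Then if (δₙ₊₁, fₙ₊₁, gₙ₊₁) = divstep(δₙ, fₙ, gₙ), the identity (fₙ₊₁, gₙ₊₁)ᵀ = 𝒯(δₙ, fₙ, gₙ) · (fₙ, gₙ)ᵀ holds in k[[x]] (interpreting the entries g(0)/x, −f(0)/x acting on (fₙ, gₙ) as valid since the resulting numerators are divisible by x). -/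
open Polynomial

-- One division step acting on `(δ, f, g)`; `Polynomial.divX` implements division by `x`.
open Classical in
noncomputable def divstep {k : Type*} [Field k] :
    ℤ × k[X] × k[X] → ℤ × k[X] × k[X] := fun s =>
  let δ := s.1; let f := s.2.1; let g := s.2.2
  if 0 < δ ∧ g.coeff 0 ≠ 0 then
    (1 - δ, g, (C (g.coeff 0) * f - C (f.coeff 0) * g).divX)
  else
    (1 + δ, f, (C (f.coeff 0) * g - C (g.coeff 0) * f).divX)

-- The divstep transition matrix, with entries in the Laurent series field `k((x))`;
-- `HahnSeries.single (-1) c` represents `c/x`.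
open Classical in
noncomputable def divstepMatrix {k : Type*} [Field k] (δ : ℤ) (f g : k[X]) :
    Matrix (Fin 2) (Fin 2) (LaurentSeries k) :=
  if 0 < δ ∧ g.coeff 0 ≠ 0 then
    !![0, 1; HahnSeries.single (-1 : ℤ) (g.coeff 0), HahnSeries.single (-1 : ℤ) (-(f.coeff 0))]
  else
    !![1, 0; HahnSeries.single (-1 : ℤ) (-(g.coeff 0)), HahnSeries.single (-1 : ℤ) (f.coeff 0)]


noncomputable def toLS {k : Type*} [Field k] (p : k[X]) : LaurentSeries k :=
  ((p : PowerSeries k) : LaurentSeries k)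

lemma single_mul_poly {k : Type*} [Field k] (c : k) (p : k[X]) :
    HahnSeries.single (-1 : ℤ) c * toLS p = HahnSeries.single (-1 : ℤ) (1:k) * toLS (C c * p) := by
  have : (HahnSeries.single (-1:ℤ) c) = HahnSeries.single (-1:ℤ) (1:k) * HahnSeries.single (0:ℤ) c := by
    rw [HahnSeries.single_mul_single]; simp
  rw [this, toLS, toLS, Polynomial.coe_mul, map_mul, mul_assoc]
  congr 1
  rw [Polynomial.coe_C, HahnSeries.ofPowerSeries_C, HahnSeries.C_apply]

lemma key {k : Type*} [Field k] (p : k[X]) (hp : p.coeff 0 = 0) :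
    toLS p.divX = HahnSeries.single (-1 : ℤ) (1:k) * toLS p := by
  have h : p = X * p.divX := by
    conv_lhs => rw [← p.divX_mul_X_add]
    rw [hp, map_zero, add_zero, mul_comm]
  conv_rhs => rw [h]
  rw [toLS, toLS, Polynomial.coe_mul, map_mul, ← mul_assoc, Polynomial.coe_X,
    HahnSeries.ofPowerSeries_X, HahnSeries.single_mul_single]
  simp

lemma toLS_sub {k : Type*} [Field k] (p q : k[X]) : toLS (p - q) = toLS p - toLS q := by
  simp [toLS, Polynomial.coe_sub]

lemma toLS_neg {k : Type*} [Field k] (p : k[X]) : toLS (-p) = - toLS p := by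
  have := toLS_sub 0 p
  set_option linter.unnecessarySimpa false in simpa [toLS] using this


lemma entry {k : Type*} [Field k] (a b : k) (f g : k[X]) (h : a * (f.coeff 0) = b * (g.coeff 0)) :
    toLS (C a * f - C b * g).divX
      = HahnSeries.single (-1 : ℤ) a * toLS f + HahnSeries.single (-1 : ℤ) (-b) * toLS g := by
  conv_rhs => rw [single_mul_poly a f, single_mul_poly (-b) g, ← mul_add]
  rw [key _ (by simp [mul_comm] at h ⊢; linear_combination h)]
  congr 1
  rw [show (C (-b) : k[X]) * g = -(C b * g) by rw [map_neg]; ring, toLS_neg, toLS_sub]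
  ring

/-- the transition-matrix identity `(fₙ₊₁, gₙ₊₁)ᵀ = 𝒯(δₙ, fₙ, gₙ)·(fₙ, gₙ)ᵀ`,
valid in `k[[x]] ⊆ k((x))` since the numerators are divisible by `x`. -/
theorem divstep_transition_matrix {k : Type*} [Field k] (δ : ℤ) (f g : k[X]) :
    ![(((divstep (δ, f, g)).2.1 : PowerSeries k) : LaurentSeries k),
      (((divstep (δ, f, g)).2.2 : PowerSeries k) : LaurentSeries k)] =
    (divstepMatrix δ f g).mulVec
      ![((f : PowerSeries k) : LaurentSeries k), ((g : PowerSeries k) : LaurentSeries k)] := by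
  by_cases h : 0 < δ ∧ g.coeff 0 ≠ 0
  · funext i
    fin_cases i
    · simp [divstep, divstepMatrix, h, Matrix.mulVec, dotProduct]
    · have := entry (g.coeff 0) (f.coeff 0) f g (mul_comm _ _)
      simp only [toLS] at this
      simp [divstep, divstepMatrix, h, Matrix.mulVec, dotProduct, this]
  · funext i
    fin_cases i
    · simp [divstep, divstepMatrix, h, Matrix.mulVec, dotProduct]
    · have := entry (f.coeff 0) (g.coeff 0) g f (mul_comm _ _)
      simp only [toLS] at this
      rw [add_comm] at this
      simp [divstep, divstepMatrix, h, Matrix.mulVec, dotProduct, this]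
end

section
/- (Degree of the GCD from divstep.) Let k be a field, d a positive integer, R₀, R₁ ∈ k[x] with deg R₀ = d > deg R₁, G = gcd(R₀, R₁). With f = x^d R₀(1/x), g = x^{d−1} R₁(1/x) and (δₙ, fₙ, gₙ) = divstepⁿ(1, f, g), one has deg G = δ_{2d−1}/2; in particular δ_{2d−1} is a nonnegative even integer. -/
open Polynomial

namespace DivstepAux

variable {k : Type*} [Field k]

lemma natDegree_le_pred {p : k[X]} {n : ℕ} (h : p.natDegree ≤ n) (h0 : p.coeff n = 0) :
    p.natDegree ≤ n - 1 := by
  rw [natDegree_le_iff_coeff_eq_zero] at h ⊢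
  intro N hN
  rcases eq_or_ne N n with rfl | hne
  · exact h0
  · exact h N (by omega)

lemma coeff_eq_zero_of_ge {p : k[X]} {n : ℕ} (h : p.natDegree ≤ n) (h0 : p.coeff n = 0)
    {i : ℕ} (hi : n ≤ i) : p.coeff i = 0 := by
  rcases eq_or_lt_of_le hi with rfl | hlt
  · exact h0
  · exact natDegree_le_iff_coeff_eq_zero.1 h i (by omega)

lemma divX_reflect (n : ℕ) (p : k[X]) (hp : p.natDegree ≤ n) :
    (reflect (n + 1) p).divX = reflect n p := by
  ext i
  rw [coeff_divX, coeff_reflect, coeff_reflect]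
  rcases le_or_gt i n with h | h
  · rw [revAt_le (by omega), revAt_le h]
    congr 1
    omega
  · rw [revAt_eq_self_of_lt (by omega), revAt_eq_self_of_lt h]
    rw [coeff_eq_zero_of_natDegree_lt (by omega), coeff_eq_zero_of_natDegree_lt (by omega)]

lemma reflect_X_pow_mul {m n : ℕ} (h : n ≤ m) (G : k[X]) (hG : G.natDegree ≤ n) :
    reflect m (X ^ (m - n) * G) = reflect n G := by
  have hm : m - n + n = m := by omega
  have h2 : reflect m (X ^ (m - n) * G) = reflect ((m - n) + n) (X ^ (m - n) * G) := by rw [hm]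
  rw [h2, reflect_mul _ _ (natDegree_X_pow_le _) hG, reflect_monomial,
    revAt_le (le_refl _), Nat.sub_self, pow_zero, one_mul]

lemma reflect_sub' (N : ℕ) (p q : k[X]) : reflect N (p - q) = reflect N p - reflect N q := by
  ext i
  simp [coeff_reflect]

lemma coeff_X_pow_mul' (p : k[X]) (n d : ℕ) :
    (X ^ n * p).coeff d = if n ≤ d then p.coeff (d - n) else 0 := by
  rw [mul_comm, coeff_mul_X_pow']

/-- The key computation: one divstep numerator, reflected. -/
lemma key (a b : k) (m n : ℕ) (hmn : m ≤ n) (F G : k[X]) (hF : F.natDegree ≤ m)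
    (hG : G.natDegree ≤ n) (hc : a * G.coeff n - b * F.coeff m = 0) :
    (C a * reflect n G - C b * reflect m F).divX
      = reflect (n - 1) (C a * G - C b * (X ^ (n - m) * F)) := by
  set H : k[X] := C a * G - C b * (X ^ (n - m) * F) with hH
  have hXF : (X ^ (n - m) * F).natDegree ≤ n :=
    le_trans (natDegree_mul_le) (by
      have := natDegree_X_pow_le (R := k) (n - m)
      omega)
  have hHdeg : H.natDegree ≤ n := by
    refine le_trans (natDegree_sub_le _ _) ?_
    have h1 := natDegree_C_mul_le a G
    have h2 := natDegree_C_mul_le b (X ^ (n - m) * F)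
    omega
  have hHcoeff : H.coeff n = 0 := by
    have hx : (X ^ (n - m) * F).coeff n = F.coeff m := by
      rw [coeff_X_pow_mul']
      rw [if_pos (by omega)]
      congr 1
      omega
    rw [hH]
    rw [coeff_sub, coeff_C_mul, coeff_C_mul, hx, hc]
  have hEq : C a * reflect n G - C b * reflect m F = reflect n H := by
    rw [hH, reflect_sub', reflect_C_mul, reflect_C_mul, reflect_X_pow_mul hmn F hF]
  rw [hEq]
  rcases Nat.eq_zero_or_pos n with rfl | hn
  · have : H = 0 := by
      have := eq_C_of_natDegree_le_zero hHdeg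
      rw [this, hHcoeff, map_zero]
    rw [this]
    simp
  · have hn' : n = (n - 1) + 1 := by omega
    rw [hn']
    exact divX_reflect (n - 1) H (by
      have := natDegree_le_pred hHdeg hHcoeff
      omega)

lemma gcd_assoc_step [DecidableEq k] (a b : k) (ha : a ≠ 0) (t P Q : k[X]) :
    Associated (gcd P (C a * Q - C b * (t * P))) (gcd P Q) := by
  apply associated_of_dvd_dvd
  · apply dvd_gcd (gcd_dvd_left _ _)
    have h1 : gcd P (C a * Q - C b * (t * P)) ∣ C a * Q := by
      have hd := gcd_dvd_right P (C a * Q - C b * (t * P))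
      have hl : gcd P (C a * Q - C b * (t * P)) ∣ C b * (t * P) :=
        (((gcd_dvd_left P _).mul_left t).mul_left _)
      have := dvd_add hd hl
      simpa using this
    have h2 : gcd P (C a * Q - C b * (t * P)) ∣ C a⁻¹ * (C a * Q) := h1.mul_left _
    have h3 : C a⁻¹ * (C a * Q) = Q := by
      rw [← mul_assoc, ← C_mul, inv_mul_cancel₀ ha, C_1, one_mul]
    rwa [h3] at h2
  · refine dvd_gcd (gcd_dvd_left _ _) ?_
    exact dvd_sub ((gcd_dvd_right P Q).mul_left _) (((gcd_dvd_left P Q).mul_left t).mul_left _)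

/-- The divstep invariant. -/
def Inv [DecidableEq k] (d : ℕ) (R₀ R₁ : k[X]) (t : ℕ) (s : ℤ × k[X] × k[X]) : Prop :=
  ∃ (m : ℕ) (n : ℤ) (F G : k[X]),
    (m : ℤ) + n = 2 * d - 1 - t ∧
    F ≠ 0 ∧ F.natDegree = m ∧
    (∀ i : ℕ, n < (i : ℤ) → G.coeff i = 0) ∧
    s = ((m : ℤ) - n, reflect m F, reflect n.toNat G) ∧
    Associated (gcd F G) (gcd R₀ R₁)

lemma Inv_step [DecidableEq k] (d : ℕ) (R₀ R₁ : k[X]) (t : ℕ) (s : ℤ × k[X] × k[X])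
    (h : Inv d R₀ R₁ t s) : Inv d R₀ R₁ (t + 1) (divstep s) := by
  obtain ⟨m, n, F, G, hsum, hF0, hFdeg, hGcoeff, hs, hgcd⟩ := h
  subst hs
  have hf0 : (reflect m F).coeff 0 = F.coeff m := by
    rw [coeff_reflect, revAt_le (Nat.zero_le m), Nat.sub_zero]
  have hg0 : (reflect n.toNat G).coeff 0 = G.coeff n.toNat := by
    rw [coeff_reflect, revAt_le (Nat.zero_le _), Nat.sub_zero]
  have hf0ne : F.coeff m ≠ 0 := by
    rw [← hFdeg]
    exact fun hc => hF0 (leadingCoeff_eq_zero.1 hc)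
  have hGdeg : G.natDegree ≤ n.toNat := by
    rw [natDegree_le_iff_coeff_eq_zero]
    intro N hN
    exact hGcoeff N (by omega)
  by_cases hcond : 0 < (m : ℤ) - n ∧ (reflect n.toNat G).coeff 0 ≠ 0
  · -- swap case
    have hstep : divstep ((m : ℤ) - n, reflect m F, reflect n.toNat G) =
        (1 - ((m : ℤ) - n), reflect n.toNat G,
          (C ((reflect n.toNat G).coeff 0) * reflect m F
            - C ((reflect m F).coeff 0) * reflect n.toNat G).divX) := by
      simp only [divstep]
      rw [if_pos hcond]
    have hGne : G.coeff n.toNat ≠ 0 := by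
      have h2 := hcond.2
      rwa [hg0] at h2
    have hn0 : 0 ≤ n := by
      by_contra hn
      push_neg at hn
      exact hGne (hGcoeff n.toNat (by omega))
    have hmn : n.toNat < m := by
      have h1 := hcond.1
      omega
    have hGdeg' : G.natDegree = n.toNat := le_antisymm hGdeg (le_natDegree_of_ne_zero hGne)
    set G' : k[X] := C (G.coeff n.toNat) * F - C (F.coeff m) * (X ^ (m - n.toNat) * G) with hG'
    have hkey := key (G.coeff n.toNat) (F.coeff m) n.toNat m (le_of_lt hmn) G F hGdeg
      (le_of_eq hFdeg) (by ring)
    have hG'le : G'.natDegree ≤ m := by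
      rw [hG']
      refine le_trans (natDegree_sub_le _ _) ?_
      have h1 := natDegree_C_mul_le (G.coeff n.toNat) F
      have h2 := natDegree_C_mul_le (F.coeff m) (X ^ (m - n.toNat) * G)
      have h3 : (X ^ (m - n.toNat) * G).natDegree ≤ m := by
        refine le_trans natDegree_mul_le ?_
        have := natDegree_X_pow_le (R := k) (m - n.toNat)
        omega
      omega
    have hG'm : G'.coeff m = 0 := by
      rw [hG', coeff_sub, coeff_C_mul, coeff_C_mul, coeff_X_pow_mul', if_pos (by omega)]
      have h4 : m - (m - n.toNat) = n.toNat := by omega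
      rw [h4]
      ring
    rw [hstep]
    refine ⟨n.toNat, (m : ℤ) - 1, G, G', ?_, fun hc => hGne (by rw [hc]; simp), hGdeg',
      ?_, ?_, ?_⟩
    · push_cast at hsum ⊢
      omega
    · intro i hi
      exact coeff_eq_zero_of_ge hG'le hG'm (by omega)
    · simp only [Prod.mk.injEq]
      refine ⟨by omega, trivial, ?_⟩
      rw [hf0, hg0]
      have h5 : ((m : ℤ) - 1).toNat = m - 1 := by omega
      rw [h5]
      exact hkey
    · have h6 := gcd_assoc_step (G.coeff n.toNat) (F.coeff m) hGne (X ^ (m - n.toNat)) G F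
      rw [← hG'] at h6
      refine h6.trans ?_
      rw [gcd_comm]
      exact hgcd
  · -- no-swap case
    have hstep : divstep ((m : ℤ) - n, reflect m F, reflect n.toNat G) =
        (1 + ((m : ℤ) - n), reflect m F,
          (C ((reflect m F).coeff 0) * reflect n.toNat G
            - C ((reflect n.toNat G).coeff 0) * reflect m F).divX) := by
      simp only [divstep]
      rw [if_neg hcond]
    set G' : k[X] := C (F.coeff m) * G - C (G.coeff n.toNat) * (X ^ (n - m).toNat * F) with hG'
    have hmain : (C (F.coeff m) * reflect n.toNat G
          - C (G.coeff n.toNat) * reflect m F).divX = reflect (n - 1).toNat G' ∧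
        (∀ i : ℕ, n - 1 < (i : ℤ) → G'.coeff i = 0) := by
      by_cases hb : G.coeff n.toNat = 0
      · have hG'eq : G' = C (F.coeff m) * G := by rw [hG', hb, map_zero, zero_mul, sub_zero]
        by_cases hn1 : 1 ≤ n
        · -- reduce exponent, g top coefficient vanishes
          have hGpred : G.natDegree ≤ n.toNat - 1 := natDegree_le_pred hGdeg hb
          have hnn : n.toNat = ((n - 1).toNat) + 1 := by omega
          constructor
          · rw [hb, map_zero, zero_mul, sub_zero, ← reflect_C_mul, hG'eq, hnn]
            exact divX_reflect _ _ (le_trans (natDegree_C_mul_le _ _) (by omega))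
          · intro i hi
            rw [hG'eq, coeff_C_mul, coeff_eq_zero_of_ge hGdeg hb (by omega), mul_zero]
        · -- `g` is already zero
          have hG0 : G = 0 := by
            ext i
            simp only [coeff_zero]
            by_cases hni : n < (i : ℤ)
            · exact hGcoeff i hni
            · have h1 : i = 0 := by omega
              have h2 : n.toNat = 0 := by omega
              rw [h1, ← h2]
              exact hb
          rw [hG0] at hG'eq ⊢
          rw [mul_zero] at hG'eq
          simp only [hG'eq, reflect_zero, mul_zero, coeff_zero, map_zero, zero_mul, zero_sub,
            neg_zero, ne_eq, coeff_C_mul]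
          constructor
          · simp
          · intro i _
            simp
      · -- leading coefficient of g nonzero, so δ ≤ 0 here
        have hbne : (reflect n.toNat G).coeff 0 ≠ 0 := by rwa [hg0]
        have hle : (m : ℤ) ≤ n := by
          by_contra hlt
          exact hcond ⟨by omega, hbne⟩
        have hn0 : (0 : ℤ) ≤ n := le_trans (by positivity) hle
        have hmn : m ≤ n.toNat := by omega
        have hkey := key (F.coeff m) (G.coeff n.toNat) m n.toNat hmn F G (le_of_eq hFdeg)
          hGdeg (by ring)
        have h7 : (n - m).toNat = n.toNat - m := by omega
        have h8 : (n - 1).toNat = n.toNat - 1 := by omega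
        have hG'le : G'.natDegree ≤ n.toNat := by
          rw [hG']
          refine le_trans (natDegree_sub_le _ _) ?_
          have h1 := natDegree_C_mul_le (F.coeff m) G
          have h2 := natDegree_C_mul_le (G.coeff n.toNat) (X ^ (n - m).toNat * F)
          have h3 : (X ^ (n - m).toNat * F).natDegree ≤ n.toNat := by
            refine le_trans natDegree_mul_le ?_
            have := natDegree_X_pow_le (R := k) ((n - m).toNat)
            omega
          omega
        have hG'c : G'.coeff n.toNat = 0 := by
          rw [hG', coeff_sub, coeff_C_mul, coeff_C_mul, coeff_X_pow_mul', if_pos (by omega)]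
          have h4 : n.toNat - (n - m).toNat = m := by omega
          rw [h4]
          ring
        constructor
        · rw [hG', h7, h8]
          exact hkey
        · intro i hi
          exact coeff_eq_zero_of_ge hG'le hG'c (by omega)
    rw [hstep]
    refine ⟨m, n - 1, F, G', ?_, hF0, hFdeg, hmain.2, ?_, ?_⟩
    · push_cast at hsum ⊢
      omega
    · simp only [Prod.mk.injEq]
      refine ⟨by omega, trivial, ?_⟩
      rw [hf0, hg0]
      exact hmain.1
    · have h6 := gcd_assoc_step (F.coeff m) (G.coeff n.toNat) hf0ne (X ^ (n - m).toNat) F G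
      rw [← hG'] at h6
      exact h6.trans hgcd

lemma Inv_init [DecidableEq k] (d : ℕ) (hd : 0 < d) (R₀ R₁ : k[X]) (hR₀deg : R₀.degree = d)
    (hR₁deg : R₁.degree < d) :
    Inv d R₀ R₁ 0 ((1 : ℤ), R₀.reflect d, R₁.reflect (d - 1)) := by
  have hR₀ne : R₀ ≠ 0 := fun h => by simp [h] at hR₀deg
  have hdeg : R₀.natDegree = d := natDegree_eq_of_degree_eq_some hR₀deg
  refine ⟨d, (d : ℤ) - 1, R₀, R₁, by push_cast; omega, hR₀ne, hdeg, ?_, ?_, Associated.refl _⟩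
  · intro i hi
    refine coeff_eq_zero_of_degree_lt (lt_of_lt_of_le hR₁deg ?_)
    exact_mod_cast Nat.cast_le.2 (by omega : d ≤ i)
  · have h1 : ((d : ℤ) - 1).toNat = d - 1 := by omega
    have h2 : (d : ℤ) - ((d : ℤ) - 1) = 1 := by omega
    rw [h1, h2]

end DivstepAux

/-- degree of the gcd from divstep.  For `R₀, R₁ ∈ k[x]` with
`deg R₀ = d > deg R₁`, running `2d − 1` divsteps on the reversals
`f = xᵈR₀(1/x)`, `g = x^{d−1}R₁(1/x)` starting from `δ₀ = 1` gives
`deg(gcd(R₀, R₁)) = δ_{2d−1}/2`; in particular `δ_{2d−1}` is a nonnegative even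
integer. -/
theorem divstep_gcd_degree {k : Type*} [Field k] [DecidableEq k] (d : ℕ) (hd : 0 < d)
    (R₀ R₁ : k[X]) (hR₀deg : R₀.degree = d) (hR₁deg : R₁.degree < d) :
    let f := R₀.reflect d
    let g := R₁.reflect (d - 1)
    let δ := (divstep^[2 * d - 1] ((1 : ℤ), f, g)).1
    0 ≤ δ ∧ 2 ∣ δ ∧ ((gcd R₀ R₁).natDegree : ℤ) = δ / 2 := by
  intro f g δ
  have H : ∀ t : ℕ, DivstepAux.Inv d R₀ R₁ t (divstep^[t] ((1 : ℤ), f, g)) := by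
    intro t
    induction t with
    | zero => simpa using DivstepAux.Inv_init d hd R₀ R₁ hR₀deg hR₁deg
    | succ t ih =>
      rw [Function.iterate_succ_apply']
      exact DivstepAux.Inv_step d R₀ R₁ t _ ih
  obtain ⟨m, n, F, G, hsum, hF0, hFdeg, hGcoeff, hs, hgcd⟩ := H (2 * d - 1)
  have hδ : δ = (m : ℤ) - n := by
    rw [show δ = (divstep^[2 * d - 1] ((1 : ℤ), f, g)).1 from rfl, hs]
  have hsum' : (m : ℤ) + n = 0 := by omega
  have hn : n = -(m : ℤ) := by omega
  refine ⟨by omega, ⟨m, by omega⟩, ?_⟩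
  have hmδ : δ = 2 * (m : ℤ) := by omega
  have h2 : δ / 2 = (m : ℤ) := by omega
  rw [h2]
  rcases Nat.eq_zero_or_pos m with hm | hm
  · -- m = 0 : the gcd is a unit
    have hFc : F = C (F.coeff 0) := eq_C_of_natDegree_le_zero (by omega)
    have hFu : IsUnit F := by
      rw [hFc]
      exact isUnit_C.2 (isUnit_iff_ne_zero.2 (fun hc => hF0 (by rw [hFc, hc, map_zero])))
    have hu : IsUnit (gcd R₀ R₁) :=
      hgcd.isUnit (isUnit_of_dvd_unit (gcd_dvd_left F G) hFu)
    rw [natDegree_eq_zero_of_isUnit hu, hm]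
  · -- m > 0 : the second polynomial has vanished
    have hG0 : G = 0 := by
      ext i
      simp only [coeff_zero]
      exact hGcoeff i (by omega)
    rw [hG0, gcd_zero_right] at hgcd
    have hFassoc : Associated F (gcd R₀ R₁) := (normalize_associated F).symm.trans hgcd
    have hgne : gcd R₀ R₁ ≠ 0 := fun hc => by
      rw [hc] at hFassoc
      exact hF0 ((associated_zero_iff_eq_zero F).1 hFassoc)
    have hdeq : (gcd R₀ R₁).natDegree = m := by
      rw [← hFdeg]
      exact le_antisymm (natDegree_le_of_dvd hFassoc.symm.dvd hF0)
        (natDegree_le_of_dvd hFassoc.dvd hgne)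
    rw [hdeq]
end

section
/- (Decreasing degree invariant used by the new division algorithm.) Let f₀, g₀ ∈ F₂[x] with deg f₀ = n and deg g₀ ≤ n − 1, g₀ ≠ 0, f₀(0) = 1, and let (δₗ, fₗ, gₗ) = divstepˡ(1, f₀, g₀). Then for every step ℓ ≥ 0, min(deg fₗ, deg gₗ) ≤ n − 1 − ⌊ℓ/2⌋ (with the convention deg 0 = −∞), i.e., at least one of fₗ, gₗ has degree at most n − 1 − ⌊ℓ/2⌋. -/
open Polynomial

-- One division step over `F₂`: `(δ, f, g) ↦ (1−δ, g, (f+g)/x)` if `δ > 0` and `g(0) = 1`,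
-- else `(δ, f, g) ↦ (1+δ, f, (g + g(0)f)/x)`; `Polynomial.divX` implements division by `x`.
open Classical in
noncomputable def divstepF2 :
    ℤ × (ZMod 2)[X] × (ZMod 2)[X] → ℤ × (ZMod 2)[X] × (ZMod 2)[X] := fun s =>
  let δ := s.1; let f := s.2.1; let g := s.2.2
  if 0 < δ ∧ g.coeff 0 = 1 then
    (1 - δ, g, (f + g).divX)
  else
    (1 + δ, f, (g + C (g.coeff 0) * f).divX)

noncomputable def degZ (p : (ZMod 2)[X]) : WithBot ℤ := p.degree.map (Nat.cast : ℕ → ℤ)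

lemma degZ_le_iff (p : (ZMod 2)[X]) (c : ℤ) :
    degZ p ≤ (c : WithBot ℤ) ↔ p = 0 ∨ (p.natDegree : ℤ) ≤ c := by
  rcases eq_or_ne p 0 with h | h
  · simp [degZ, h]
  · rw [degZ, degree_eq_natDegree h, Nat.cast_withBot, WithBot.map_coe, WithBot.coe_le_coe]
    simp [h]

lemma degZ_add {f g : (ZMod 2)[X]} {c : ℤ} (hf : degZ f ≤ (c : WithBot ℤ))
    (hg : degZ g ≤ (c : WithBot ℤ)) : degZ (f + g) ≤ (c : WithBot ℤ) := by
  rw [degZ_le_iff] at hf hg ⊢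
  rcases hf with hf | hf
  · simpa [hf] using hg
  rcases hg with hg | hg
  · simpa [hg] using Or.inr hf
  right
  have h1 := natDegree_add_le f g
  rcases max_cases f.natDegree g.natDegree with ⟨he, _⟩ | ⟨he, _⟩ <;> rw [he] at h1 <;> omega

lemma degZ_divX {p : (ZMod 2)[X]} {c : ℤ} (hp : degZ p ≤ (c : WithBot ℤ)) :
    degZ p.divX ≤ ((c - 1 : ℤ) : WithBot ℤ) := by
  rw [degZ_le_iff] at hp ⊢
  rcases eq_or_ne p.divX 0 with h | h
  · exact Or.inl h
  have hp0 : p ≠ 0 := by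
    rintro rfl; simp at h
  right
  have hlt : p.divX.degree < p.degree := degree_divX_lt hp0
  have hnat : p.divX.natDegree < p.natDegree := natDegree_lt_natDegree h hlt
  rcases hp with hp | hp
  · exact absurd hp hp0
  omega

lemma degZ_mono {c c' : ℤ} (h : c ≤ c') {p : (ZMod 2)[X]}
    (hp : degZ p ≤ (c : WithBot ℤ)) : degZ p ≤ (c' : WithBot ℤ) := by
  rw [degZ_le_iff] at hp ⊢
  rcases hp with hp | hp
  · exact Or.inl hp
  · exact Or.inr (le_trans hp h)

lemma divstep_invariant (n : ℕ) (f₀ g₀ : (ZMod 2)[X])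
    (hf : f₀.degree = n) (hg : g₀.degree < n) :
    ∀ ℓ : ℕ, ∃ a b : ℤ,
      a + b = ℓ + 1 ∧
      b - a = (divstepF2^[ℓ] ((1 : ℤ), f₀, g₀)).1 ∧
      degZ (divstepF2^[ℓ] ((1 : ℤ), f₀, g₀)).2.1 ≤ (((n : ℤ) - a : ℤ) : WithBot ℤ) ∧
      degZ (divstepF2^[ℓ] ((1 : ℤ), f₀, g₀)).2.2 ≤ (((n : ℤ) - b : ℤ) : WithBot ℤ) := by
  intro ℓ
  induction ℓ with
  | zero =>
    simp only [Function.iterate_zero, id_eq]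
    refine ⟨0, 1, by norm_num, by norm_num, ?_, ?_⟩
    · rw [degZ_le_iff]
      right
      have : f₀.natDegree = n := natDegree_eq_of_degree_eq_some hf
      simp [this]
    · rw [degZ_le_iff]
      rcases eq_or_ne g₀ 0 with h | h
      · exact Or.inl h
      · right
        have : g₀.natDegree < n := (natDegree_lt_iff_degree_lt h).mpr hg
        omega
  | succ ℓ ih =>
    obtain ⟨a, b, hab, hd, hF, hG⟩ := ih
    rw [Function.iterate_succ_apply']
    set s := divstepF2^[ℓ] ((1 : ℤ), f₀, g₀) with hs
    unfold divstepF2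
    by_cases hc : 0 < s.1 ∧ s.2.2.coeff 0 = 1
    · rw [if_pos hc]
      refine ⟨b, a + 1, by push_cast; omega, by omega, hG, ?_⟩
      have hba : a < b := by omega
      have hF' : degZ s.2.1 ≤ (((n : ℤ) - a : ℤ) : WithBot ℤ) := hF
      have hG' : degZ s.2.2 ≤ (((n : ℤ) - a : ℤ) : WithBot ℤ) := degZ_mono (by omega) hG
      have := degZ_divX (degZ_add hF' hG')
      have heq : ((n : ℤ) - a - 1 : ℤ) = ((n : ℤ) - (a + 1) : ℤ) := by ring
      rwa [heq] at this
    · rw [if_neg hc]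
      refine ⟨a, b + 1, by push_cast; omega, by omega, hF, ?_⟩
      have h01 : s.2.2.coeff 0 = 0 ∨ s.2.2.coeff 0 = 1 := by
        generalize s.2.2.coeff 0 = x; revert x; decide
      have heq : ((n : ℤ) - b - 1 : ℤ) = ((n : ℤ) - (b + 1) : ℤ) := by ring
      rcases h01 with h0 | h1
      · rw [h0]
        simp only [map_zero, zero_mul, add_zero]
        rw [← heq]
        exact degZ_divX hG
      · have hδ : s.1 ≤ 0 := by
          by_contra hpos
          exact hc ⟨by omega, h1⟩
        rw [h1]
        simp only [map_one, one_mul]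
        have hF' : degZ s.2.1 ≤ (((n : ℤ) - b : ℤ) : WithBot ℤ) := degZ_mono (by omega) hF
        rw [← heq]
        exact degZ_divX (degZ_add hG hF')

/-- decreasing degree invariant.  If `deg f₀ = n`, `deg g₀ ≤ n − 1`,
`g₀ ≠ 0` and `f₀(0) = 1`, then for every step `ℓ ≥ 0` at least one of `f_ℓ, g_ℓ` has
degree at most `n − 1 − ⌊ℓ/2⌋`, i.e.
`min(deg f_ℓ, deg g_ℓ) ≤ n − 1 − ⌊ℓ/2⌋` (degrees in `WithBot`, with `deg 0 = ⊥`,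
and the bound read as an integer). -/
theorem divstep_min_degree_decreasing (n : ℕ) (f₀ g₀ : (ZMod 2)[X])
    (hf : f₀.degree = n) (hg : g₀.degree < n) (hg0 : g₀ ≠ 0) (hf0 : f₀.coeff 0 = 1) :
    ∀ ℓ : ℕ,
      (min (divstepF2^[ℓ] ((1 : ℤ), f₀, g₀)).2.1.degree
           (divstepF2^[ℓ] ((1 : ℤ), f₀, g₀)).2.2.degree).map (Nat.cast : ℕ → ℤ)
        ≤ (((n : ℤ) - 1 - (ℓ / 2 : ℕ) : ℤ) : WithBot ℤ) := by
  intro ℓ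
  obtain ⟨a, b, hab, hd, hF, hG⟩ := divstep_invariant n f₀ g₀ hf hg ℓ
  set s := divstepF2^[ℓ] ((1 : ℤ), f₀, g₀) with hs
  have hmono : Monotone (WithBot.map (Nat.cast : ℕ → ℤ)) :=
    WithBot.monotone_map_iff.mpr Nat.mono_cast
  rcases le_total a b with hle | hle
  · have hb : ((n : ℤ) - b : ℤ) ≤ (n : ℤ) - 1 - (ℓ / 2 : ℕ) := by omega
    calc (min s.2.1.degree s.2.2.degree).map (Nat.cast : ℕ → ℤ)
        ≤ s.2.2.degree.map (Nat.cast : ℕ → ℤ) := hmono (min_le_right _ _)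
      _ = degZ s.2.2 := rfl
      _ ≤ _ := degZ_mono hb hG
  · have ha : ((n : ℤ) - a : ℤ) ≤ (n : ℤ) - 1 - (ℓ / 2 : ℕ) := by omega
    calc (min s.2.1.degree s.2.2.degree).map (Nat.cast : ℕ → ℤ)
        ≤ s.2.1.degree.map (Nat.cast : ℕ → ℤ) := hmono (min_le_left _ _)
      _ = degZ s.2.1 := rfl
      _ ≤ _ := degZ_mono ha hF
end
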